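/- arXiv:1104.4297 — 3 statements merged into one kernel-verified Lean document; each statement's English description precedes it below -/
import Mathlib

section
/- Let m, s be integers with m ≥ 2s−1 ≥ 1, let 2 ≤ i ≤ e−1, and let l be an integer with s ≤ l ≤ min((c_i−1)s, (m+1)−s). Let γ = (γ_1,…,γ_e) be an e-tuple of formal power series in K⟦t⟧ such that E_{jh}(γ) ≡ 0 mod t^{m+1} for all pairs 1 ≤ j < h−1 ≤ e−1, and such that ord(γ_i) = s and ord(γ_{i+1}) = l. Then ord(γ_j) ≥ s for every j = 1,…,e. -/
open MvPolynomial

/-- The Riemenschneider quasi-determinantal equation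
`E_{ij} = x_i x_j - x_{i+1} (∏_{n=i+1}^{j-1} x_n^{c_n - 2}) x_{j-1}`
of the affine toric surface determined by the integers `c`. -/
noncomputable def E (K : Type*) [Field K] (c : ℕ → ℕ) (i j : ℕ) : MvPolynomial ℕ K :=
  X i * X j - X (i + 1) * (∏ n ∈ Finset.Ico (i + 1) j, X n ^ (c n - 2)) * X (j - 1)

/-!
Since `K⟦t⟧` is a domain, a congruence `E_{jh}(γ) ≡ 0 mod t^{m+1}` whose first monomial has
order `≤ m` forces `ord γ_j + ord γ_h ≥ ord γ_{j+1} + ∑ (c_n - 2) ord γ_n + ord γ_{h-1}`.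
Going down from `i`, the equation `E_{j,i+1}` with `ord γ_{j+1} ≥ s` would give
`ord γ_j + l ≥ 2s + (c_i - 2)s ≥ s + l` if `ord γ_j < s`; going up from `i+1`, the equation
`E_{i,h}` with `ord γ_{h-1} ≥ s` would give `s + ord γ_h ≥ l + s ≥ 2s` if `ord γ_h < s`.
The bound `l ≤ m + 1 - s` is exactly what keeps the first monomial below `t^{m+1}`.
-/

namespace PowerSeries

theorem order_le_of_le_order_sub {R : Type*} [Ring R] {φ ψ : R⟦X⟧} {N : ℕ∞}
    (h : N ≤ (φ - ψ).order) (hφ : φ.order < N) : ψ.order ≤ φ.order := by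
  have key := min_order_le_order_add ψ (φ - ψ)
  rw [add_sub_cancel] at key
  by_contra! hlt
  exact (lt_min hlt (hφ.trans_le h)).not_ge key

end PowerSeries

section RiemenschneiderEquations

variable {K : Type*} [Field K] {c : ℕ → ℕ} {γ : ℕ → PowerSeries K}

theorem aeval_E (j h : ℕ) :
    aeval γ (E K c j h) =
      γ j * γ h - γ (j + 1) * (∏ n ∈ Finset.Ico (j + 1) h, γ n ^ (c n - 2)) * γ (h - 1) := by
  simp [E]

theorem order_add_le_of_E {m j h : ℕ}
    (hE : ((m + 1 : ℕ) : ℕ∞) ≤ (aeval γ (E K c j h)).order)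
    (hlt : (γ j).order + (γ h).order < (m + 1 : ℕ)) :
    (γ (j + 1)).order + ∑ n ∈ Finset.Ico (j + 1) h, (c n - 2) • (γ n).order
      + (γ (h - 1)).order ≤ (γ j).order + (γ h).order := by
  rw [aeval_E] at hE
  simpa only [PowerSeries.order_mul, PowerSeries.order_prod, PowerSeries.order_pow] using
    PowerSeries.order_le_of_le_order_sub hE (by rwa [PowerSeries.order_mul])

variable {m s l i : ℕ}

theorem le_order_of_le_order_succ {j : ℕ} (hji : j < i)
    (hE : ((m + 1 : ℕ) : ℕ∞) ≤ (aeval γ (E K c j (i + 1))).order)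
    (hγi : (γ i).order = s) (hγi1 : (γ (i + 1)).order = l)
    (hsl : s ≤ l) (hl : l ≤ (c i - 1) * s) (hlm : l ≤ m + 1 - s)
    (hsucc : (s : ℕ∞) ≤ (γ (j + 1)).order) : (s : ℕ∞) ≤ (γ j).order := by
  by_contra! hlt
  obtain ⟨u, hu⟩ := ENat.ne_top_iff_exists.mp hlt.ne_top
  have hus : u < s := by rw [← hu] at hlt; exact_mod_cast hlt
  have key := order_add_le_of_E hE (by rw [← hu, hγi1]; exact_mod_cast (by omega : u + l < m + 1))
  have hprod : (c i - 2) • (s : ℕ∞) ≤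
      ∑ n ∈ Finset.Ico (j + 1) (i + 1), (c n - 2) • (γ n).order :=
    hγi ▸ Finset.single_le_sum (f := fun n ↦ (c n - 2) • (γ n).order) (fun _ _ ↦ zero_le)
      (Finset.mem_Ico.mpr ⟨hji, i.lt_succ_self⟩)
  have hbound : ((s + (c i - 2) * s + s : ℕ) : ℕ∞) ≤ ((u + l : ℕ) : ℕ∞) :=
    calc ((s + (c i - 2) * s + s : ℕ) : ℕ∞) = s + (c i - 2) • (s : ℕ∞) + s := by
          rw [nsmul_eq_mul]; norm_cast
      _ ≤ (γ (j + 1)).order + ∑ n ∈ Finset.Ico (j + 1) (i + 1), (c n - 2) • (γ n).order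
            + (γ (i + 1 - 1)).order := by
          rw [Nat.add_sub_cancel, hγi]; gcongr
      _ ≤ (γ j).order + (γ (i + 1)).order := key
      _ = ((u + l : ℕ) : ℕ∞) := by rw [← hu, hγi1]; push_cast; rfl
  have hc : (c i - 1) * s ≤ (c i - 2) * s + s := by
    rw [← Nat.succ_mul]; exact Nat.mul_le_mul_right s (by omega)
  have := Nat.cast_le.mp hbound
  omega

theorem le_order_succ_of_le_order {h : ℕ}
    (hE : ((m + 1 : ℕ) : ℕ∞) ≤ (aeval γ (E K c i (h + 1))).order)
    (hγi : (γ i).order = s) (hγi1 : (γ (i + 1)).order = l)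
    (hsl : s ≤ l) (hlm : l ≤ m + 1 - s)
    (hprev : (s : ℕ∞) ≤ (γ h).order) : (s : ℕ∞) ≤ (γ (h + 1)).order := by
  by_contra! hlt
  obtain ⟨u, hu⟩ := ENat.ne_top_iff_exists.mp hlt.ne_top
  have hus : u < s := by rw [← hu] at hlt; exact_mod_cast hlt
  have key := order_add_le_of_E hE (by rw [← hu, hγi]; exact_mod_cast (by omega : s + u < m + 1))
  have hbound : ((l + s : ℕ) : ℕ∞) ≤ ((s + u : ℕ) : ℕ∞) :=
    calc ((l + s : ℕ) : ℕ∞) = l + 0 + s := by push_cast; rw [add_zero]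
      _ ≤ (γ (i + 1)).order + ∑ n ∈ Finset.Ico (i + 1) (h + 1), (c n - 2) • (γ n).order
            + (γ (h + 1 - 1)).order := by
          rw [Nat.add_sub_cancel, hγi1]; gcongr; exact zero_le
      _ ≤ (γ i).order + (γ (h + 1)).order := key
      _ = ((s + u : ℕ) : ℕ∞) := by rw [← hu, hγi]; push_cast; rfl
  have := Nat.cast_le.mp hbound
  omega

end RiemenschneiderEquations

theorem order_ge_of_contact_general (K : Type*) [Field K] (e : ℕ)
    (c : ℕ → ℕ)
    (m s : ℕ)
    (i : ℕ) (hi2 : 2 ≤ i) (hie : i + 1 ≤ e)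
    (l : ℕ) (hsl : s ≤ l) (hl : l ≤ min ((c i - 1) * s) ((m + 1) - s))
    (γ : ℕ → PowerSeries K)
    (hE : ∀ j h : ℕ, 1 ≤ j → j + 2 ≤ h → h ≤ e →
      ((m + 1 : ℕ) : ℕ∞) ≤ (MvPolynomial.aeval γ (E K c j h)).order)
    (hγi : (γ i).order = (s : ℕ∞)) (hγi1 : (γ (i + 1)).order = (l : ℕ∞)) :
    ∀ j : ℕ, 1 ≤ j → j ≤ e → ((s : ℕ) : ℕ∞) ≤ (γ j).order := by
  obtain ⟨hlc, hlm⟩ := le_min_iff.mp hl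
  have below : ∀ j, 1 ≤ j → j ≤ i → (s : ℕ∞) ≤ (γ j).order := fun j hj hji ↦
    Nat.decreasingInduction' (P := fun k ↦ (s : ℕ∞) ≤ (γ k).order)
      (fun k hki hjk ↦ le_order_of_le_order_succ hki (hE k (i + 1) (by omega) (by omega) hie)
        hγi hγi1 hsl hlc hlm)
      hji hγi.ge
  have above : ∀ h, i + 1 ≤ h → h ≤ e → (s : ℕ∞) ≤ (γ h).order := by
    intro h hih
    induction h, hih using Nat.le_induction with
    | base => exact fun _ ↦ hγi1 ▸ Nat.cast_le.mpr hsl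
    | succ h hih ih =>
      exact fun hhe ↦ le_order_succ_of_le_order (hE i (h + 1) (by omega) (by omega) hhe)
        hγi hγi1 hsl hlm (ih (by omega))
  intro j hj hje
  rcases le_or_gt j i with hji | hij
  · exact below j hj hji
  · exact above j hij hje

/-- Lemma 4.2: if `m ≥ 2s-1 ≥ 1`, `2 ≤ i ≤ e-1`, `s ≤ l ≤ min((c_i-1)s, (m+1)-s)`,
and `γ` satisfies all the equations `E_{jh}` mod `t^{m+1}` with `ord(γ_i) = s`,
`ord(γ_{i+1}) = l`, then `ord(γ_j) ≥ s` for all `1 ≤ j ≤ e`. -/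
theorem order_ge_of_contact (K : Type*) [Field K] (e : ℕ) (he : 4 ≤ e)
    (c : ℕ → ℕ) (hc : ∀ i, 2 ≤ i → i + 1 ≤ e → 2 ≤ c i)
    (m s : ℕ) (hs : 1 ≤ s) (hm : 2 * s - 1 ≤ m)
    (i : ℕ) (hi2 : 2 ≤ i) (hie : i + 1 ≤ e)
    (l : ℕ) (hsl : s ≤ l) (hl : l ≤ min ((c i - 1) * s) ((m + 1) - s))
    (γ : ℕ → PowerSeries K)
    (hE : ∀ j h : ℕ, 1 ≤ j → j + 2 ≤ h → h ≤ e →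
      ((m + 1 : ℕ) : ℕ∞) ≤ (MvPolynomial.aeval γ (E K c j h)).order)
    (hγi : (γ i).order = (s : ℕ∞)) (hγi1 : (γ (i + 1)).order = (l : ℕ∞)) :
    ∀ j : ℕ, 1 ≤ j → j ≤ e → ((s : ℕ) : ℕ∞) ≤ (γ j).order :=
  order_ge_of_contact_general K e c m s i hi2 hie l hsl hl γ hE hγi hγi1
end

section
/- Let m, s be integers with s ≥ 1 and m ≥ 2s−1. Let γ = (γ_1,…,γ_e) be an e-tuple of formal power series in K⟦t⟧ such that: ord(γ_j) ≥ s for all j = 1,…,e; ord(γ_1) = s; and E_{1,j}(γ) ≡ 0 mod t^{m+1} for all 3 ≤ j ≤ e. Then E_{jh}(γ) ≡ 0 mod t^{m+1} for all pairs 2 ≤ j < h−1 ≤ e−1, and hence for all pairs 1 ≤ j < h−1 ≤ e−1. -/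
/-!
Multiplying `E_{jh}` by `x_1` expresses it through the first row:
`x_1 E_{jh} = x_j E_{1h} - x_{h-1} (∏_{n=j+1}^{h-1} x_n^{c_n-2}) E_{1,j+1}`.
Evaluated at `γ`, the right-hand side has order at least `s + (m + 1)`, since each `γ_n` has
order at least `s`; as `ord γ_1 = s` exactly, it can be cancelled, leaving `ord E_{jh}(γ) ≥ m + 1`.
-/

open MvPolynomial

namespace PowerSeries

variable {R : Type*}

theorem le_order_sub [Ring R] {φ ψ : PowerSeries R} {n : ℕ∞} (hφ : n ≤ φ.order)
    (hψ : n ≤ ψ.order) : n ≤ (φ - ψ).order := by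
  rw [sub_eq_add_neg]
  exact (le_min hφ (order_neg ψ ▸ hψ)).trans (min_order_le_order_add _ _)

theorem le_order_of_le_order_mul [Semiring R] [NoZeroDivisors R] {φ ψ : PowerSeries R}
    {s : ℕ} {n : ℕ∞} (hφ : φ.order = s) (h : s + n ≤ (φ * ψ).order) : n ≤ ψ.order := by
  rwa [order_mul, hφ, ENat.add_le_add_iff_left (ENat.natCast_ne_top s)] at h

end PowerSeries

theorem X_mul_E (K : Type*) [Field K] (c : ℕ → ℕ) {i j h : ℕ} (hij : i ≤ j) (hjh : j + 1 ≤ h) :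
    X i * E K c j h =
      X j * E K c i h - X (h - 1) * (∏ n ∈ Finset.Ico (j + 1) h, X n ^ (c n - 2)) *
        E K c i (j + 1) := by
  have hsplit := Finset.prod_Ico_consecutive (fun n => (X n : MvPolynomial ℕ K) ^ (c n - 2))
    (Nat.succ_le_succ hij) hjh
  simp only [E, Nat.add_sub_cancel, ← hsplit]
  ring

theorem le_order_aeval_E_of_first_row {K : Type*} [Field K] (c : ℕ → ℕ) (γ : ℕ → PowerSeries K)
    {e s : ℕ} {n : ℕ∞} (hord : ∀ j : ℕ, 1 ≤ j → j ≤ e → (s : ℕ∞) ≤ (γ j).order)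
    (hγ1 : (γ 1).order = s)
    (hE1 : ∀ j : ℕ, 3 ≤ j → j ≤ e → n ≤ (aeval γ (E K c 1 j)).order)
    {j h : ℕ} (hj : 2 ≤ j) (hjh : j + 2 ≤ h) (hhe : h ≤ e) :
    n ≤ (aeval γ (E K c j h)).order := by
  refine PowerSeries.le_order_of_le_order_mul hγ1 ?_
  rw [← aeval_X (R := K) γ 1, ← map_mul, X_mul_E K c (by omega) (by omega), map_sub, map_mul,
    map_mul, map_mul, aeval_X, aeval_X]
  refine PowerSeries.le_order_sub ?_ ?_
  · exact (add_le_add (hord j (by omega) (by omega)) (hE1 h (by omega) hhe)).trans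
      (PowerSeries.le_order_mul _ _)
  · refine (add_le_add ?_ (hE1 (j + 1) (by omega) (by omega))).trans
      (PowerSeries.le_order_mul _ _)
    exact (hord (h - 1) (by omega) (by omega)).trans (le_self_add.trans
      (PowerSeries.le_order_mul _ _))

theorem all_equations_of_first_row_general (K : Type*) [Field K] (e : ℕ)
    (c : ℕ → ℕ)
    (m s : ℕ)
    (γ : ℕ → PowerSeries K)
    (hord : ∀ j : ℕ, 1 ≤ j → j ≤ e → ((s : ℕ) : ℕ∞) ≤ (γ j).order)
    (hγ1 : (γ 1).order = (s : ℕ∞))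
    (hE1 : ∀ j : ℕ, 3 ≤ j → j ≤ e →
      ((m + 1 : ℕ) : ℕ∞) ≤ (MvPolynomial.aeval γ (E K c 1 j)).order) :
    (∀ j h : ℕ, 2 ≤ j → j + 2 ≤ h → h ≤ e →
      ((m + 1 : ℕ) : ℕ∞) ≤ (MvPolynomial.aeval γ (E K c j h)).order) ∧
    (∀ j h : ℕ, 1 ≤ j → j + 2 ≤ h → h ≤ e →
      ((m + 1 : ℕ) : ℕ∞) ≤ (MvPolynomial.aeval γ (E K c j h)).order) := by
  have higher_rows : ∀ j h : ℕ, 2 ≤ j → j + 2 ≤ h → h ≤ e →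
      ((m + 1 : ℕ) : ℕ∞) ≤ (aeval γ (E K c j h)).order :=
    fun j h hj hjh hhe => le_order_aeval_E_of_first_row c γ hord hγ1 hE1 hj hjh hhe
  refine ⟨higher_rows, fun j h hj hjh hhe => ?_⟩
  obtain rfl | hj2 : j = 1 ∨ 2 ≤ j := by omega
  · exact hE1 h (by omega) hhe
  · exact higher_rows j h hj2 hjh hhe

/-- Proof of Proposition 4.7 (2): if `ord(γ_j) ≥ s` for all `j`, `ord(γ_1) = s`, and the
equations `E_{1,j}` for `3 ≤ j ≤ e` vanish mod `t^{m+1}`, then all the equations `E_{jh}`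
with `2 ≤ j < h-1 ≤ e-1`, and hence all the equations with `1 ≤ j < h-1 ≤ e-1`,
vanish mod `t^{m+1}`. -/
theorem all_equations_of_first_row (K : Type*) [Field K] (e : ℕ) (he : 4 ≤ e)
    (c : ℕ → ℕ) (hc : ∀ i, 2 ≤ i → i + 1 ≤ e → 2 ≤ c i)
    (m s : ℕ) (hs : 1 ≤ s) (hm : 2 * s - 1 ≤ m)
    (γ : ℕ → PowerSeries K)
    (hord : ∀ j : ℕ, 1 ≤ j → j ≤ e → ((s : ℕ) : ℕ∞) ≤ (γ j).order)
    (hγ1 : (γ 1).order = (s : ℕ∞))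
    (hE1 : ∀ j : ℕ, 3 ≤ j → j ≤ e →
      ((m + 1 : ℕ) : ℕ∞) ≤ (MvPolynomial.aeval γ (E K c 1 j)).order) :
    (∀ j h : ℕ, 2 ≤ j → j + 2 ≤ h → h ≤ e →
      ((m + 1 : ℕ) : ℕ∞) ≤ (MvPolynomial.aeval γ (E K c j h)).order) ∧
    (∀ j h : ℕ, 1 ≤ j → j + 2 ≤ h → h ≤ e →
      ((m + 1 : ℕ) : ℕ∞) ≤ (MvPolynomial.aeval γ (E K c j h)).order) :=
  all_equations_of_first_row_general K e c m s γ hord hγ1 hE1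
end

section
/- Let m be an integer with m ≥ max{c_2,…,c_{e−1}}. Then the number of equivalence classes of T(m) under ~ consisting of triples (i,s,l) with s = 1 (that is, the number of irreducible components with index of speciality 1) equals c_2 + c_3 + ⋯ + c_{e−1} − 2(e−2) + 1. -/
/-!
The gluing relation is a forest: a triple `(i + 1, s, m_{i+1}^s)` has at most one parent
`(i, s, s)`, and parents have smaller `i`. Following parents therefore picks out a unique
parentless triple in each class, so the classes of speciality one correspond to the parentless
triples with `s = 1`. For `m ≥ c_i` we have `m_i^1 = c_i - 1`; these are the `∑ (c_i - 1)`
triples `(i, 1, l)` with `1 ≤ l ≤ c_i - 1`, less the `e - 3` glued ones `(i, 1, c_i - 1)`,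
`3 ≤ i ≤ e - 1`.
-/

/-- `m_i^s := min((c_i - 1)s, (m+1) - s)`. -/
def mIS (c : ℤ → ℤ) (m s i : ℤ) : ℤ := min ((c i - 1) * s) ((m + 1) - s)

/-- The index set `T(m) = {(i,s,l) : 2 ≤ i ≤ e-1, 1 ≤ s, 2s-1 ≤ m, s ≤ l ≤ m_i^s}` of the
irreducible components of the fiber over the singular point of the `m`-th jet scheme
(Theorem 4.11). -/
def Tset (c : ℤ → ℤ) (e m : ℤ) : Set (ℤ × ℤ × ℤ) :=
  {x | 2 ≤ x.1 ∧ x.1 ≤ e - 1 ∧ 1 ≤ x.2.1 ∧ 2 * x.2.1 - 1 ≤ m ∧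
    x.2.1 ≤ x.2.2 ∧ x.2.2 ≤ mIS c m x.2.1 x.1}

/-- The generating relation of the identifications `(i,s,s) ~ (i+1, s, m_{i+1}^s)`
for `2 ≤ i ≤ e-2`. -/
def genRel (c : ℤ → ℤ) (e m : ℤ) (a b : Tset c e m) : Prop :=
  ∃ i s : ℤ, 2 ≤ i ∧ i ≤ e - 2 ∧ (a : ℤ × ℤ × ℤ) = (i, s, s) ∧
    (b : ℤ × ℤ × ℤ) = (i + 1, s, mIS c m s (i + 1))

/-- `N(m)`: the number of equivalence classes of `T(m)` under the equivalence relation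
generated by `genRel`, i.e. the number of irreducible components of the fiber over the
singular point of the `m`-th jet scheme. -/
noncomputable def Ncount (c : ℤ → ℤ) (e m : ℤ) : ℕ := Nat.card (Quot (genRel c e m))

theorem Relation.ReflTransGen.iff_of_rel {α : Type*} {r : α → α → Prop} {P : α → Prop}
    (hP : ∀ a b, r a b → (P a ↔ P b)) {a b : α} (h : Relation.ReflTransGen r a b) :
    P a ↔ P b := by
  induction h with
  | refl => rfl
  | tail _ hbc ih => exact ih.trans (hP _ _ hbc)

namespace WellFounded

variable {α : Type*} {r : α → α → Prop}

open Classical in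
noncomputable def root (hwf : WellFounded r) : α → α :=
  hwf.fix fun b IH => if h : ∃ a, r a b then IH h.choose h.choose_spec else b

section

variable (hwf : WellFounded r)

theorem root_eq_self {b : α} (hb : ∀ a, ¬ r a b) : hwf.root b = b := by
  rw [root, hwf.fix_eq, dif_neg (not_exists.2 hb)]

theorem root_eq_root_choose {b : α} (h : ∃ a, r a b) : hwf.root b = hwf.root h.choose := by
  rw [root, hwf.fix_eq, dif_pos h]

theorem root_minimal (a b : α) : ¬ r a (hwf.root b) := by
  induction b using hwf.induction with
  | _ b ih =>
    by_cases h : ∃ a, r a b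
    · rw [hwf.root_eq_root_choose h]
      exact ih _ h.choose_spec
    · rw [hwf.root_eq_self (not_exists.1 h)]
      exact not_exists.1 h a

theorem reflTransGen_root (b : α) : Relation.ReflTransGen r (hwf.root b) b := by
  induction b using hwf.induction with
  | _ b ih =>
    by_cases h : ∃ a, r a b
    · rw [hwf.root_eq_root_choose h]
      exact (ih _ h.choose_spec).tail h.choose_spec
    · rw [hwf.root_eq_self (not_exists.1 h)]

theorem root_eq_root_of_rel (hu : Relator.LeftUnique r) {a b : α} (h : r a b) :
    hwf.root b = hwf.root a := by
  have hex : ∃ a, r a b := ⟨a, h⟩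
  rw [hwf.root_eq_root_choose hex, hu hex.choose_spec h]

theorem quot_mk_root (b : α) : Quot.mk r (hwf.root b) = Quot.mk r b :=
  Quot.eqvGen_sound (Relation.EqvGen.reflTransGen_le_eqvGen r _ _ (hwf.reflTransGen_root b))

noncomputable def quotEquivMinimal (hu : Relator.LeftUnique r) : Quot r ≃ {b // ∀ a, ¬ r a b} where
  toFun := Quot.lift (fun b => ⟨hwf.root b, fun a => hwf.root_minimal a b⟩)
    fun _ _ h => Subtype.ext (hwf.root_eq_root_of_rel hu h).symm
  invFun b := Quot.mk r b
  left_inv := Quot.ind hwf.quot_mk_root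
  right_inv b := Subtype.ext (hwf.root_eq_self b.2)

end

theorem natCard_classes_eq (hwf : WellFounded r) (hu : Relator.LeftUnique r) {P : α → Prop}
    (hP : ∀ a b, r a b → (P a ↔ P b)) :
    Nat.card {q : Quot r // ∃ x, Quot.mk r x = q ∧ P x} =
      Nat.card {b // (∀ a, ¬ r a b) ∧ P b} := by
  refine Nat.card_congr ((Equiv.subtypeEquiv (hwf.quotEquivMinimal hu) fun q => ?_).trans
    (Equiv.subtypeSubtypeEquivSubtypeInter _ P))
  induction q using Quot.ind with
  | mk b =>
    change _ ↔ P (hwf.root b)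
    constructor
    · rintro ⟨x, hx, hPx⟩
      have hroot : hwf.root x = hwf.root b := congrArg (fun q => (hwf.quotEquivMinimal hu q).1) hx
      exact hroot ▸ ((hwf.reflTransGen_root x).iff_of_rel hP).2 hPx
    · exact fun h => ⟨hwf.root b, hwf.quot_mk_root b, h⟩

end WellFounded

section Gluing

variable {c : ℤ → ℤ} {e m : ℤ}

theorem genRel_speciality_eq {a b : Tset c e m} (h : genRel c e m a b) :
    (a : ℤ × ℤ × ℤ).2.1 = (b : ℤ × ℤ × ℤ).2.1 := by
  obtain ⟨i, s, -, -, ha, hb⟩ := h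
  rw [ha, hb]

theorem genRel_fst_add_one {a b : Tset c e m} (h : genRel c e m a b) :
    (a : ℤ × ℤ × ℤ).1 + 1 = (b : ℤ × ℤ × ℤ).1 := by
  obtain ⟨i, s, -, -, ha, hb⟩ := h
  rw [ha, hb]

variable (c e m)

theorem wellFounded_genRel : WellFounded (genRel c e m) :=
  Subrelation.wf (fun {a b} h => by
      have hstep := genRel_fst_add_one h
      have hi : 2 ≤ (a : ℤ × ℤ × ℤ).1 := a.2.1
      show (a : ℤ × ℤ × ℤ).1.toNat < (b : ℤ × ℤ × ℤ).1.toNat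
      omega)
    (measure fun x : Tset c e m => (x : ℤ × ℤ × ℤ).1.toNat).wf

theorem leftUnique_genRel : Relator.LeftUnique (genRel c e m) := by
  rintro a a' b ⟨i, s, -, -, ha, hb⟩ ⟨i', s', -, -, ha', hb'⟩
  have hchild := hb.symm.trans hb'
  simp only [Prod.mk.injEq, add_left_inj] at hchild
  apply Subtype.ext
  rw [ha, ha', hchild.1, hchild.2.1]

end Gluing

noncomputable def specialityOne (c : ℤ → ℤ) (e : ℤ) : Finset (ℤ × ℤ × ℤ) :=
  (Finset.Icc 2 (e - 1)).biUnion fun i => (Finset.Icc 1 (c i - 1)).image fun l => (i, 1, l)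

noncomputable def specialityOneGlued (c : ℤ → ℤ) (e : ℤ) : Finset (ℤ × ℤ × ℤ) :=
  (Finset.Icc 3 (e - 1)).image fun i => (i, 1, c i - 1)

section SpecialityOne

variable {c : ℤ → ℤ} {e m : ℤ}

theorem mem_specialityOne {i s l : ℤ} :
    (i, s, l) ∈ specialityOne c e ↔ 2 ≤ i ∧ i ≤ e - 1 ∧ s = 1 ∧ 1 ≤ l ∧ l ≤ c i - 1 := by
  simp only [specialityOne, Finset.mem_biUnion, Finset.mem_Icc, Finset.mem_image, Prod.mk.injEq]
  constructor
  · rintro ⟨i, ⟨h2, he⟩, l, hl, rfl, rfl, rfl⟩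
    exact ⟨h2, he, rfl, hl⟩
  · rintro ⟨h2, he, rfl, hl⟩
    exact ⟨i, ⟨h2, he⟩, l, hl, rfl, rfl, rfl⟩

theorem mIS_one {i : ℤ} (hm : c i ≤ m) : mIS c m 1 i = c i - 1 := by
  rw [mIS, mul_one]
  omega

theorem mem_Tset_and_speciality_eq_one_iff (hm : ∀ i, 2 ≤ i → i ≤ e - 1 → c i ≤ m)
    {y : ℤ × ℤ × ℤ} : y ∈ Tset c e m ∧ y.2.1 = 1 ↔ y ∈ specialityOne c e := by
  obtain ⟨i, s, l⟩ := y
  rw [mem_specialityOne]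
  constructor
  · rintro ⟨⟨h2, he, -, -, hl1, hl⟩, rfl⟩
    rw [mIS_one (hm i h2 he)] at hl
    exact ⟨h2, he, rfl, hl1, hl⟩
  · rintro ⟨h2, he, rfl, hl1, hl⟩
    have := hm i h2 he
    refine ⟨⟨h2, he, le_rfl, by dsimp only; omega, hl1, ?_⟩, rfl⟩
    rwa [mIS_one (hm i h2 he)]

theorem exists_genRel_iff (hc : ∀ i, 2 ≤ i → i ≤ e - 1 → 2 ≤ c i)
    (hm : ∀ i, 2 ≤ i → i ≤ e - 1 → c i ≤ m) (b : Tset c e m) (hb : (b : ℤ × ℤ × ℤ).2.1 = 1) :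
    (∃ a, genRel c e m a b) ↔ (b : ℤ × ℤ × ℤ) ∈ specialityOneGlued c e := by
  simp only [specialityOneGlued, Finset.mem_image, Finset.mem_Icc]
  constructor
  · rintro ⟨a, i, s, h2, he, -, hb'⟩
    rw [hb'] at hb ⊢
    subst hb
    exact ⟨i + 1, ⟨by omega, by omega⟩, by rw [mIS_one (hm _ (by omega) (by omega))]⟩
  · rintro ⟨j, ⟨h3, he⟩, hj⟩
    have hparent : (j - 1, 1, 1) ∈ Tset c e m :=
      ((mem_Tset_and_speciality_eq_one_iff hm).2 <| mem_specialityOne.2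
        ⟨by omega, by omega, rfl, le_rfl, by linarith [hc (j - 1) (by omega) (by omega)]⟩).1
    refine ⟨⟨_, hparent⟩, j - 1, 1, by omega, by omega, rfl, ?_⟩
    rw [← hj, sub_add_cancel, mIS_one (hm j (by omega) he)]

theorem specialityOneGlued_subset (hc : ∀ i, 2 ≤ i → i ≤ e - 1 → 2 ≤ c i) :
    specialityOneGlued c e ⊆ specialityOne c e := by
  intro y hy
  obtain ⟨i, hi, rfl⟩ := Finset.mem_image.1 hy
  rw [Finset.mem_Icc] at hi
  have := hc i (by omega) hi.2
  exact mem_specialityOne.2 ⟨by omega, hi.2, rfl, by omega, le_rfl⟩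

theorem card_specialityOne (hc : ∀ i, 2 ≤ i → i ≤ e - 1 → 2 ≤ c i) :
    ((specialityOne c e).card : ℤ) = ∑ i ∈ Finset.Icc 2 (e - 1), (c i - 1) := by
  rw [specialityOne, Finset.card_biUnion, Nat.cast_sum]
  · refine Finset.sum_congr rfl fun i hi => ?_
    rw [Finset.mem_Icc] at hi
    have := hc i hi.1 hi.2
    rw [Finset.card_image_of_injective _ fun l l' h => (Prod.mk.inj (Prod.mk.inj h).2).2,
      Int.card_Icc]
    omega
  · intro i _ j _ hij
    simp only [Function.onFun, Finset.disjoint_left, Finset.mem_image]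
    rintro _ ⟨l, -, rfl⟩ ⟨l', -, h⟩
    exact hij (Prod.mk.inj h).1.symm

theorem card_specialityOneGlued (he : 3 ≤ e) :
    ((specialityOneGlued c e).card : ℤ) = e - 3 := by
  rw [specialityOneGlued, Finset.card_image_of_injective _ fun i j h => (Prod.mk.inj h).1,
    Int.card_Icc]
  omega

theorem natCard_minimal_specialityOne (hc : ∀ i, 2 ≤ i → i ≤ e - 1 → 2 ≤ c i)
    (hm : ∀ i, 2 ≤ i → i ≤ e - 1 → c i ≤ m) :
    Nat.card {b : Tset c e m // (∀ a, ¬ genRel c e m a b) ∧ (b : ℤ × ℤ × ℤ).2.1 = 1} =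
      (specialityOne c e \ specialityOneGlued c e).card := by
  have hroot (b : Tset c e m) : ((∀ a, ¬ genRel c e m a b) ∧ (b : ℤ × ℤ × ℤ).2.1 = 1) ↔
      (b : ℤ × ℤ × ℤ) ∈ specialityOne c e \ specialityOneGlued c e := by
    rw [Finset.mem_sdiff, ← mem_Tset_and_speciality_eq_one_iff hm]
    constructor
    · rintro ⟨hmin, h1⟩
      exact ⟨⟨b.2, h1⟩, fun hg => not_exists.2 hmin ((exists_genRel_iff hc hm b h1).2 hg)⟩
    · rintro ⟨⟨-, h1⟩, hg⟩
      exact ⟨fun a ha => hg ((exists_genRel_iff hc hm b h1).1 ⟨a, ha⟩), h1⟩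
  rw [← Nat.card_eq_finsetCard]
  exact Nat.card_congr <| (Equiv.subtypeEquivRight hroot).trans <|
    (Equiv.subtypeSubtypeEquivSubtypeInter (· ∈ Tset c e m) (· ∈ _)).trans <|
      Equiv.subtypeEquivRight fun y => and_iff_right_of_imp fun hy =>
        ((mem_Tset_and_speciality_eq_one_iff hm).2 (Finset.mem_sdiff.1 hy).1).1

end SpecialityOne

/-- Corollary 4.20: for `m ≥ max{c_i}`, the number of equivalence classes of `T(m)`
with index of speciality `s = 1` equals `c_2 + ⋯ + c_{e-1} - 2(e-2) + 1`, the number of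
exceptional divisors on the minimal resolution. -/
theorem card_speciality_one_classes (e : ℤ) (he : 4 ≤ e) (c : ℤ → ℤ)
    (hc : ∀ i, 2 ≤ i → i ≤ e - 1 → 2 ≤ c i)
    (m : ℤ) (hm : ∀ i, 2 ≤ i → i ≤ e - 1 → c i ≤ m) :
    (Nat.card {q : Quot (genRel c e m) //
        ∃ x : Tset c e m, Quot.mk (genRel c e m) x = q ∧ (x : ℤ × ℤ × ℤ).2.1 = 1} : ℤ)
      = (∑ i ∈ Finset.Icc (2 : ℤ) (e - 1), c i) - 2 * (e - 2) + 1 := by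
  have hglued := specialityOneGlued_subset hc
  rw [(wellFounded_genRel c e m).natCard_classes_eq (leftUnique_genRel c e m)
      (P := fun x : Tset c e m => (x : ℤ × ℤ × ℤ).2.1 = 1)
      (fun a b h => by rw [genRel_speciality_eq h]),
    natCard_minimal_specialityOne hc hm, Finset.card_sdiff_of_subset hglued,
    Nat.cast_sub (Finset.card_le_card hglued), card_specialityOne hc,
    card_specialityOneGlued (by omega), Finset.sum_sub_distrib, Finset.sum_const, Int.card_Icc]
  simp only [sub_add_cancel, Int.nsmul_eq_mul, Int.ofNat_toNat, mul_one]
  omega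
end
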